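/- Let σ : A → A⁺ be a tame substitution. Then there exist x₀ ∈ X_σ and p ≥ 1 such that σᵖ(x₀) = x₀, where σ acts on X_σ by applying σ to each coordinate and concatenating, with σ(x(0)) placed starting at coordinate 0. -/

import Mathlib

namespace SubstMin

variable {A : Type*}

/-- Apply a map `σ : A → A⁺` to a word by concatenation. -/
def substW (σ : A → List A) (w : List A) : List A := w.flatMap σ

/-- `n`-th iterate of the substitution applied to a word. -/
def substIter (σ : A → List A) (n : ℕ) (w : List A) : List A := (substW σ)^[n] w

/-- The set `A_l` of letters `a` with `|σⁿ(a)| → ∞`. -/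
def longLetters (σ : A → List A) : Set A :=
  {a | Filter.Tendsto (fun n => (substIter σ n [a]).length) Filter.atTop Filter.atTop}

/-- The set `A_s = A \ A_l`. -/
def shortLetters (σ : A → List A) : Set A := (longLetters σ)ᶜ

/-- `σ` is a substitution: letters map to nonempty words and `A_l ≠ ∅`. -/
def IsSubstitution (σ : A → List A) : Prop :=
  (∀ a, σ a ≠ []) ∧ (longLetters σ).Nonempty

/-- The language `L(σ)`: factors of some `σⁿ(a)`, `n ≥ 1`. -/
def lang (σ : A → List A) : Set (List A) :=
  {w | ∃ (a : A) (n : ℕ), 1 ≤ n ∧ w <:+: substIter σ n [a]}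

/-- The finite factor `x[s,t]` of a bi-infinite sequence. -/
def factorOf (x : ℤ → A) (s t : ℤ) : List A :=
  (List.range (t - s + 1).toNat).map fun i => x (s + (i : ℤ))

/-- The substitution dynamical system `X_σ`. -/
def XSub (σ : A → List A) : Set (ℤ → A) :=
  {x | ∀ s t : ℤ, s ≤ t → factorOf x s t ∈ lang σ}

/-- The left shift `T`. -/
def shiftT (x : ℤ → A) : ℤ → A := fun i => x (i + 1)

/-- A subshift is minimal if it is nonempty and has no nonempty proper closed
shift-invariant subset. -/
def IsMinimalSubshift [TopologicalSpace A] (X : Set (ℤ → A)) : Prop :=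
  X.Nonempty ∧ ∀ Y : Set (ℤ → A), Y ⊆ X → Y.Nonempty → IsClosed Y →
    shiftT '' Y = Y → Y = X

/-- `a ∈ A_l` is left isolated: `σⁿ(a) = u a w` with `u ∈ A_s⁺`, `w ∈ A*`. -/
def LeftIsolated (σ : A → List A) (a : A) : Prop :=
  ∃ n : ℕ, 1 ≤ n ∧ ∃ u w : List A, u ≠ [] ∧ (∀ b ∈ u, b ∈ shortLetters σ) ∧
    substIter σ n [a] = u ++ a :: w

/-- `a ∈ A_l` is right isolated: `σᵐ(a) = w a u` with `u ∈ A_s⁺`, `w ∈ A*`. -/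
def RightIsolated (σ : A → List A) (a : A) : Prop :=
  ∃ n : ℕ, 1 ≤ n ∧ ∃ u w : List A, u ≠ [] ∧ (∀ b ∈ u, b ∈ shortLetters σ) ∧
    substIter σ n [a] = w ++ a :: u

/-- `σ` is tame: no letter of `A_l` is left or right isolated. -/
def Tame (σ : A → List A) : Prop :=
  ∀ a ∈ longLetters σ, ¬ LeftIsolated σ a ∧ ¬ RightIsolated σ a

/-- `σ` is `l`-primitive. -/
def LPrimitive (σ : A → List A) : Prop :=
  ∃ n : ℕ, 1 ≤ n ∧ ∀ a ∈ longLetters σ, ∀ b ∈ longLetters σ, a ∈ substIter σ n [b]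

/-- `a → b` : `b` occurs in `σⁿ(a)` for some `n ≥ 1`. -/
def arrow (σ : A → List A) (a b : A) : Prop :=
  ∃ n : ℕ, 1 ≤ n ∧ b ∈ substIter σ n [a]

/-- `A_{∘,l} = {a ∈ A_l | a → a}`. -/
def circLong (σ : A → List A) : Set A := {a | a ∈ longLetters σ ∧ arrow σ a a}

/-- `A_{min,l}`: letters of `A_l` minimal in `A_l`. -/
def minLong (σ : A → List A) : Set A :=
  {a | a ∈ longLetters σ ∧ ∀ b ∈ longLetters σ, arrow σ a b → arrow σ b a}

/-- `x` is a periodic point of the shift. -/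
def IsPeriodicPoint (x : ℤ → A) : Prop := ∃ p : ℕ, 1 ≤ p ∧ shiftT^[p] x = x

/-- `X` is a single periodic orbit. -/
def IsSinglePeriodicOrbit (X : Set (ℤ → A)) : Prop :=
  ∃ x : ℤ → A, IsPeriodicPoint x ∧ X = Set.range fun i : ℤ => fun j => x (j + i)

/-- `y = σ(x)` : `y` is obtained from `x` by applying `σ` to each coordinate and
concatenating, with `σ(x(0))` placed starting at coordinate `0`. -/
def IsSubstImage (σ : A → List A) (x y : ℤ → A) : Prop :=
  ∃ o : ℤ → ℤ, o 0 = 0 ∧ (∀ i : ℤ, o (i + 1) = o i + (σ (x i)).length) ∧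
    ∀ i : ℤ, factorOf y (o i) (o (i + 1) - 1) = σ (x i)

/-- The map `s` on nonempty subsets of `A_l`: `s(F) = ⋃_{a ∈ F} (Lett(σ(a)) ∩ A_l)`. -/
def sMap (σ : A → List A) (F : Set A) : Set A :=
  {b | b ∈ longLetters σ ∧ ∃ a ∈ F, b ∈ σ a}

end SubstMin

/-!
For a tame substitution one finds long letters `b`, `a`, a word `s` of short letters with
`b s a` legal, and a period `P ≥ 1` such that `σ^P(b)` ends with `b`, `σ^P(a)` begins with `a`
and `σ^P(s) = s`. Indeed, the maps sending a long letter to the last, resp. first, long letter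
of its image eventually cycle on such a pair; tameness forbids short letters after `b`, resp.
before `a`, in their images; and the iterates of the short word `s` are bounded in length, hence
eventually periodic. Then `σ^(nP)(b s) . σ^(nP)(a)` converges as `n → ∞` to a point
`x₀ ∈ X_σ` with `σ^P(x₀) = x₀`.
-/

open Filter Function

theorem Set.Finite.exists_isPeriodicPt_iterate {α : Type*} {f : α → α} {x : α}
    (h : (Set.range fun k => f^[k] x).Finite) : ∃ i m, 0 < m ∧ IsPeriodicPt f m (f^[i] x) := by
  obtain ⟨i, j, hij, heq⟩ : ∃ i j, i ≠ j ∧ f^[i] x = f^[j] x := by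
    by_contra! H
    exact Set.infinite_range_of_injective (fun i j e => not_imp_not.1 (H i j) e) h
  wlog hlt : i < j generalizing i j
  · exact this j i hij.symm heq.symm (by omega)
  refine ⟨i, j - i, by omega, ?_⟩
  rw [IsPeriodicPt, IsFixedPt, ← iterate_add_apply, Nat.sub_add_cancel hlt.le, heq]

namespace SubstMin

variable {A : Type*} {σ : A → List A}

lemma substW_append (σ : A → List A) (u v : List A) :
    substW σ (u ++ v) = substW σ u ++ substW σ v := List.flatMap_append

@[simp] lemma substW_singleton (σ : A → List A) (a : A) : substW σ [a] = σ a := by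
  simp [substW]

lemma substIter_succ (σ : A → List A) (n : ℕ) (w : List A) :
    substIter σ (n + 1) w = substIter σ n (substW σ w) :=
  iterate_succ_apply _ n w

lemma substIter_succ' (σ : A → List A) (n : ℕ) (w : List A) :
    substIter σ (n + 1) w = substW σ (substIter σ n w) :=
  iterate_succ_apply' _ n w

lemma substIter_add (σ : A → List A) (m n : ℕ) (w : List A) :
    substIter σ (m + n) w = substIter σ m (substIter σ n w) :=
  iterate_add_apply _ m n w

lemma iterate_substIter (σ : A → List A) (m k : ℕ) (w : List A) :
    (substIter σ m)^[k] w = substIter σ (m * k) w := by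
  rw [substIter, iterate_mul]
  rfl

lemma substIter_append (σ : A → List A) (n : ℕ) (u v : List A) :
    substIter σ n (u ++ v) = substIter σ n u ++ substIter σ n v := by
  induction n with
  | zero => rfl
  | succ n ih => rw [substIter_succ', substIter_succ', substIter_succ', ih, substW_append]

lemma substIter_prefix {u v : List A} (n : ℕ) (h : u <+: v) :
    substIter σ n u <+: substIter σ n v := by
  obtain ⟨t, rfl⟩ := h
  exact ⟨_, (substIter_append σ n u t).symm⟩

lemma substIter_suffix {u v : List A} (n : ℕ) (h : u <:+ v) :
    substIter σ n u <:+ substIter σ n v := by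
  obtain ⟨s, rfl⟩ := h
  exact ⟨_, (substIter_append σ n s u).symm⟩

lemma substIter_infix {u v : List A} (n : ℕ) (h : u <:+: v) :
    substIter σ n u <:+: substIter σ n v := by
  obtain ⟨s, t, rfl⟩ := h
  exact ⟨_, _, by rw [substIter_append, substIter_append]⟩

lemma append_infix_of_suffix_of_prefix {u u' w w' : List A} (v : List A) (hu : u' <:+ u)
    (hw : w' <+: w) : u' ++ v ++ w' <:+: u ++ v ++ w := by
  obtain ⟨p, rfl⟩ := hu
  obtain ⟨r, rfl⟩ := hw
  exact ⟨p, r, by simp⟩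

lemma mem_lang_of_infix {u w : List A} (h : u <:+: w) (hw : w ∈ lang σ) : u ∈ lang σ :=
  let ⟨a, n, hn, hinf⟩ := hw
  ⟨a, n, hn, h.trans hinf⟩

lemma substIter_mem_lang {w : List A} (hw : w ∈ lang σ) (m : ℕ) :
    substIter σ m w ∈ lang σ := by
  obtain ⟨a, n, hn, hinf⟩ := hw
  refine ⟨a, m + n, by omega, ?_⟩
  rw [substIter_add]
  exact substIter_infix m hinf

lemma substIter_singleton_mem_lang (a : A) {n : ℕ} (hn : 1 ≤ n) :
    substIter σ n [a] ∈ lang σ :=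
  ⟨a, n, hn, List.infix_refl _⟩

def ShortWord (σ : A → List A) (w : List A) : Prop := ∀ b ∈ w, b ∈ shortLetters σ

@[simp] lemma shortWord_nil : ShortWord σ [] := by simp [ShortWord]

@[simp] lemma shortWord_cons {a : A} {w : List A} :
    ShortWord σ (a :: w) ↔ a ∈ shortLetters σ ∧ ShortWord σ w :=
  List.forall_mem_cons

@[simp] lemma shortWord_append {u v : List A} :
    ShortWord σ (u ++ v) ↔ ShortWord σ u ∧ ShortWord σ v :=
  List.forall_mem_append

section LongAndShort

variable (hne : ∀ a, σ a ≠ [])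
include hne

lemma length_le_length_substW (w : List A) : w.length ≤ (substW σ w).length := by
  induction w with
  | nil => simp
  | cons a w ih =>
    have : 1 ≤ (σ a).length := List.length_pos_iff.mpr (hne a)
    simp only [substW, List.flatMap_cons, List.length_append, List.length_cons] at ih ⊢
    omega

lemma monotone_length_substIter (w : List A) : Monotone fun n => (substIter σ n w).length :=
  monotone_nat_of_le_succ fun n => by
    simpa only [substIter_succ'] using length_le_length_substW hne _

lemma mem_shortLetters_iff {a : A} :
    a ∈ shortLetters σ ↔ ∃ C, ∀ n, (substIter σ n [a]).length ≤ C := by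
  refine ⟨fun h => ?_, fun ⟨C, hC⟩ h => ?_⟩
  · by_contra! hC
    exact h (tendsto_atTop_atTop_of_monotone (monotone_length_substIter hne [a])
      fun C => (hC C).imp fun _ => le_of_lt)
  · obtain ⟨n, hn⟩ := (h.eventually_gt_atTop C).exists
    exact (hC n).not_gt hn

lemma ShortWord.exists_bound {w : List A} (hw : ShortWord σ w) :
    ∃ C, ∀ n, (substIter σ n w).length ≤ C := by
  induction w with
  | nil => exact ⟨0, fun n => by simp [substIter, iterate_fixed (rfl : substW σ [] = [])]⟩
  | cons a w ih =>
    rw [shortWord_cons] at hw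
    obtain ⟨C, hC⟩ := (mem_shortLetters_iff hne).1 hw.1
    obtain ⟨D, hD⟩ := ih hw.2
    refine ⟨C + D, fun n => ?_⟩
    rw [← List.singleton_append, substIter_append, List.length_append]
    exact add_le_add (hC n) (hD n)

lemma mem_shortLetters_of_shortWord {a : A} (h : ShortWord σ (σ a)) : a ∈ shortLetters σ := by
  obtain ⟨C, hC⟩ := h.exists_bound hne
  refine (mem_shortLetters_iff hne).2 ⟨max C 1, fun n => ?_⟩
  cases n with
  | zero => simp [substIter]
  | succ n => simpa [substIter_succ] using le_max_of_le_left (hC n)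

lemma mem_shortLetters_of_mem {b c : A} (hc : c ∈ shortLetters σ) (hb : b ∈ σ c) :
    b ∈ shortLetters σ := by
  obtain ⟨C, hC⟩ := (mem_shortLetters_iff hne).1 hc
  refine (mem_shortLetters_iff hne).2 ⟨C, fun n => le_trans ?_ (hC (n + 1))⟩
  rw [substIter_succ, substW_singleton]
  exact (substIter_infix n ((List.singleton_infix_iff b _).2 hb)).length_le

lemma ShortWord.substW {w : List A} (hw : ShortWord σ w) : ShortWord σ (substW σ w) :=
  fun _ hb =>
    let ⟨c, hc, hbc⟩ := List.mem_flatMap.1 hb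
    mem_shortLetters_of_mem hne (hw c hc) hbc

lemma exists_mem_longLetters {a : A} (ha : a ∈ longLetters σ) :
    ∃ e ∈ σ a, e ∈ longLetters σ := by
  by_contra! h
  exact mem_shortLetters_of_shortWord hne h ha

lemma substIter_ne_singleton {a : A} (ha : a ∈ longLetters σ) {m : ℕ} (hm : 0 < m) :
    substIter σ m [a] ≠ [a] := by
  intro h
  refine (mem_shortLetters_iff hne).2 ⟨1, fun n => ?_⟩ ha
  calc (substIter σ n [a]).length ≤ (substIter σ (m * n) [a]).length :=
        monotone_length_substIter hne _ (Nat.le_mul_of_pos_left n hm)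
    _ = 1 := by rw [← iterate_substIter, iterate_fixed h]; rfl

end LongAndShort

def IsFirstLong (σ : A → List A) (w : List A) (e : A) : Prop :=
  e ∈ longLetters σ ∧ ∃ s t, w = s ++ e :: t ∧ ShortWord σ s

def IsLastLong (σ : A → List A) (w : List A) (e : A) : Prop :=
  e ∈ longLetters σ ∧ ∃ s t, w = s ++ e :: t ∧ ShortWord σ t

lemma exists_isFirstLong {w : List A} (h : ∃ e ∈ w, e ∈ longLetters σ) :
    ∃ e, IsFirstLong σ w e := by
  induction w with
  | nil => simp at h
  | cons c w ih =>
    by_cases hc : c ∈ longLetters σ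
    · exact ⟨c, hc, [], w, rfl, shortWord_nil⟩
    · obtain ⟨e, he, s, t, rfl, hs⟩ := ih <| by
        obtain ⟨e, he, hel⟩ := h
        exact ⟨e, (List.mem_cons.1 he).resolve_left (by rintro rfl; exact hc hel), hel⟩
      exact ⟨e, he, c :: s, t, rfl, shortWord_cons.2 ⟨hc, hs⟩⟩

lemma exists_isLastLong {w : List A} (h : ∃ e ∈ w, e ∈ longLetters σ) :
    ∃ e, IsLastLong σ w e := by
  obtain ⟨e, he, s, t, hw, hs⟩ := exists_isFirstLong (w := w.reverse) (by simpa using h)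
  refine ⟨e, he, t.reverse, s.reverse, ?_, fun b hb => hs b (List.mem_reverse.1 hb)⟩
  simpa using congrArg List.reverse hw

section Iteration

variable (hne : ∀ a, σ a ≠ [])
include hne

lemma IsFirstLong.image {w : List A} {e e' : A} (hw : IsFirstLong σ w e)
    (he : IsFirstLong σ (σ e) e') : IsFirstLong σ (substW σ w) e' := by
  obtain ⟨-, s, t, rfl, hs⟩ := hw
  obtain ⟨he', s', t', hσe, hs'⟩ := he
  refine ⟨he', substW σ s ++ s', t' ++ substW σ t, ?_, by simp [hs.substW hne, hs']⟩
  simp [substW, hσe]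

lemma IsLastLong.image {w : List A} {e e' : A} (hw : IsLastLong σ w e)
    (he : IsLastLong σ (σ e) e') : IsLastLong σ (substW σ w) e' := by
  obtain ⟨-, s, t, rfl, ht⟩ := hw
  obtain ⟨he', s', t', hσe, ht'⟩ := he
  refine ⟨he', substW σ s ++ s', t' ++ substW σ t, ?_, by simp [ht.substW hne, ht']⟩
  simp [substW, hσe]

variable {F G : A → A}

lemma isFirstLong_iterate (hF : ∀ e ∈ longLetters σ, IsFirstLong σ (σ e) (F e))
    {e : A} (he : e ∈ longLetters σ) : ∀ k, IsFirstLong σ (substIter σ k [e]) (F^[k] e)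
  | 0 => ⟨he, [], [], rfl, shortWord_nil⟩
  | k + 1 => by
    have ih := isFirstLong_iterate hF he k
    rw [substIter_succ', iterate_succ_apply']
    exact ih.image hne (hF _ ih.1)

lemma isLastLong_iterate (hG : ∀ e ∈ longLetters σ, IsLastLong σ (σ e) (G e))
    {e : A} (he : e ∈ longLetters σ) : ∀ k, IsLastLong σ (substIter σ k [e]) (G^[k] e)
  | 0 => ⟨he, [], [], rfl, shortWord_nil⟩
  | k + 1 => by
    have ih := isLastLong_iterate hG he k
    rw [substIter_succ', iterate_succ_apply']
    exact ih.image hne (hG _ ih.1)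

end Iteration

section Tame

variable (htame : Tame σ)
include htame

lemma prefix_of_isFirstLong {e : A} {n : ℕ} (h : IsFirstLong σ (substIter σ n [e]) e) :
    [e] <+: substIter σ n [e] := by
  obtain ⟨he, s, t, hst, hs⟩ := h
  rcases n with _ | n
  · exact List.prefix_refl _
  obtain rfl | hs0 := eq_or_ne s []
  · exact ⟨t, hst.symm⟩
  · exact ((htame e he).1 ⟨n + 1, by omega, s, t, hs0, hs, hst⟩).elim

lemma suffix_of_isLastLong {e : A} {n : ℕ} (h : IsLastLong σ (substIter σ n [e]) e) :
    [e] <:+ substIter σ n [e] := by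
  obtain ⟨he, s, t, hst, ht⟩ := h
  rcases n with _ | n
  · exact List.suffix_refl _
  obtain rfl | ht0 := eq_or_ne t []
  · exact ⟨s, hst.symm⟩
  · exact ((htame e he).2 ⟨n + 1, by omega, t, s, ht0, ht, hst⟩).elim

end Tame

def Linked (σ : A → List A) (b a : A) : Prop :=
  b ∈ longLetters σ ∧ a ∈ longLetters σ ∧
    ∃ s, ShortWord σ s ∧ [b] ++ s ++ [a] ∈ lang σ

section Linked

variable (hne : ∀ a, σ a ≠ [])
include hne

lemma Linked.image {b a b' a' : A} (h : Linked σ b a) (hb : IsLastLong σ (σ b) b')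
    (ha : IsFirstLong σ (σ a) a') : Linked σ b' a' := by
  obtain ⟨-, -, s, hs, hlang⟩ := h
  obtain ⟨hb', u, t, hσb, ht⟩ := hb
  obtain ⟨ha', s', v, hσa, hs'⟩ := ha
  refine ⟨hb', ha', t ++ substW σ s ++ s', by simp [ht, hs.substW hne, hs'],
    mem_lang_of_infix ⟨u, v, ?_⟩ (substIter_mem_lang hlang 1)⟩
  simp only [substIter, iterate_one, substW_append, substW_singleton, hσb, hσa]
  simp

lemma Linked.iterate {F G : A → A} (hF : ∀ e ∈ longLetters σ, IsFirstLong σ (σ e) (F e))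
    (hG : ∀ e ∈ longLetters σ, IsLastLong σ (σ e) (G e)) {b a : A} (h : Linked σ b a) :
    ∀ k, Linked σ (G^[k] b) (F^[k] a)
  | 0 => h
  | k + 1 => by
    have ih := h.iterate hF hG k
    rw [iterate_succ_apply', iterate_succ_apply']
    exact ih.image hne (hG _ ih.1) (hF _ ih.2.1)

/-- Following first long letters from `c` must cycle; tameness makes the cycle letter `e` a
prefix of its own image, and since `e` is long that image contains a second long letter. -/
lemma exists_linked [Finite A] (htame : Tame σ) {F : A → A}
    (hF : ∀ e ∈ longLetters σ, IsFirstLong σ (σ e) (F e)) {c : A}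
    (hc : c ∈ longLetters σ) : ∃ b a, Linked σ b a := by
  obtain ⟨i, m, hm, hper⟩ :=
    (Set.toFinite (Set.range fun k => F^[k] c)).exists_isPeriodicPt_iterate
  set e := F^[i] c
  have he : e ∈ longLetters σ := (isFirstLong_iterate hne hF hc i).1
  obtain ⟨t, ht⟩ := prefix_of_isFirstLong htame (hper ▸ isFirstLong_iterate hne hF he m)
  have hlong : ∃ a ∈ t, a ∈ longLetters σ := by
    by_contra! h
    obtain rfl | ht0 := eq_or_ne t []
    · exact substIter_ne_singleton hne he hm ht.symm
    · exact (htame e he).2 ⟨m, hm, t, [], ht0, h, ht.symm⟩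
  obtain ⟨a, ha, s, t', rfl, hs⟩ := exists_isFirstLong hlong
  refine ⟨e, a, he, ha, s, hs,
    mem_lang_of_infix ⟨[], t', ?_⟩ (substIter_singleton_mem_lang e hm)⟩
  simp [← ht]

end Linked

structure PeriodicSeed (σ : A → List A) where
  left : A
  right : A
  gap : List A
  period : ℕ
  one_le_period : 1 ≤ period
  left_long : left ∈ longLetters σ
  right_long : right ∈ longLetters σ
  left_suffix : [left] <:+ substIter σ period [left]
  right_prefix : [right] <+: substIter σ period [right]
  gap_fixed : substIter σ period gap = gap
  mem_lang : [left] ++ gap ++ [right] ∈ lang σ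

theorem exists_periodicSeed [Finite A] (hne : ∀ a, σ a ≠ []) (htame : Tame σ)
    (hlong : (longLetters σ).Nonempty) : Nonempty (PeriodicSeed σ) := by
  obtain ⟨c, hc⟩ := hlong
  have : Nonempty A := ⟨c⟩
  choose! F hF using fun e (he : e ∈ longLetters σ) =>
    exists_isFirstLong (exists_mem_longLetters hne he)
  choose! G hG using fun e (he : e ∈ longLetters σ) =>
    exists_isLastLong (exists_mem_longLetters hne he)
  obtain ⟨b₀, a₀, h₀⟩ := exists_linked hne htame hF hc
  obtain ⟨i, m, hm, hper⟩ :=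
    (Set.toFinite (Set.range fun k => (Prod.map G F)^[k] (b₀, a₀))).exists_isPeriodicPt_iterate
  simp only [Prod.map_iterate, Prod.map_apply, isPeriodicPt_prodMap] at hper
  obtain ⟨hb, ha, s, hs, hlang⟩ := h₀.iterate hne hF hG i
  set b := G^[i] b₀
  set a := F^[i] a₀
  have hb_suffix (n : ℕ) : [b] <:+ substIter σ (m * n) [b] :=
    suffix_of_isLastLong htame <| by
      simpa only [(hper.1.mul_const n).eq] using isLastLong_iterate hne hG hb (m * n)
  have ha_prefix (n : ℕ) : [a] <+: substIter σ (m * n) [a] :=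
    prefix_of_isFirstLong htame <| by
      simpa only [(hper.2.mul_const n).eq] using isFirstLong_iterate hne hF ha (m * n)
  obtain ⟨C, hC⟩ := hs.exists_bound hne
  have hgap_finite : (Set.range fun k => (substIter σ m)^[k] s).Finite := by
    refine (List.finite_length_le A C).subset ?_
    rintro _ ⟨k, rfl⟩
    simpa only [iterate_substIter, Set.mem_ofPred_eq] using hC (m * k)
  obtain ⟨j, q, hq, hgap⟩ := hgap_finite.exists_isPeriodicPt_iterate
  refine ⟨b, a, substIter σ (m * j) s, m * q, Nat.mul_pos hm hq, hb, ha, hb_suffix q,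
    ha_prefix q, by simpa only [IsPeriodicPt, IsFixedPt, iterate_substIter] using hgap, ?_⟩
  have h := substIter_mem_lang hlang (m * j)
  rw [substIter_append, substIter_append] at h
  exact mem_lang_of_infix (append_infix_of_suffix_of_prefix _ (hb_suffix j) (ha_prefix j)) h

section Window

def window (x : ℤ → A) (s : ℤ) (n : ℕ) : List A :=
  (List.range n).map fun i : ℕ => x (s + i)

variable {x y : ℤ → A}

@[simp] lemma length_window (s : ℤ) (n : ℕ) : (window x s n).length = n := by simp [window]

@[simp] lemma getElem_window (s : ℤ) (n i : ℕ) (h : i < (window x s n).length) :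
    (window x s n)[i] = x (s + i) := by simp [window]

lemma factorOf_eq_window (s t : ℤ) : factorOf x s t = window x s (t - s + 1).toNat := by
  simp [factorOf, window, ← List.map_eq_flatMap]

lemma window_add (s : ℤ) (m n : ℕ) :
    window x s (m + n) = window x s m ++ window x (s + m) n := by
  simp [window, List.range_add, add_assoc]

lemma window_eq_take_drop (s : ℤ) {k l n : ℕ} (h : k + l ≤ n) :
    window x (s + k) l = ((window x s n).drop k).take l := by
  refine List.ext_getElem (by simp; omega) fun i _ _ => ?_
  simp [add_assoc]

def Centered (x : ℤ → A) (u v : List A) : Prop :=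
  window x (-u.length) u.length = u ∧ window x 0 v.length = v

lemma Centered.window_eq {u v : List A} (h : Centered x u v) :
    window x (-u.length) (u.length + v.length) = u ++ v := by
  rw [window_add, neg_add_cancel, h.1, h.2]

lemma exists_offsets (g : ℤ → ℕ) :
    ∃ o : ℤ → ℤ, o 0 = 0 ∧ ∀ i, o (i + 1) = o i + g i := by
  refine ⟨fun i => ∑ k ∈ Finset.range i.toNat, (g k : ℤ) -
    ∑ k ∈ Finset.range (-i).toNat, (g (i + k) : ℤ), by simp, fun i => ?_⟩
  beta_reduce
  obtain ⟨n, rfl | rfl⟩ := Int.eq_nat_or_neg i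
  · rw [show ((n : ℤ) + 1).toNat = n + 1 by omega, show (-((n : ℤ) + 1)).toNat = 0 by omega,
      show (-(n : ℤ)).toNat = 0 by omega]
    simp [Finset.sum_range_succ]
  · rcases n with _ | n
    · simp
    rw [show (-((n + 1 : ℕ) : ℤ) + 1).toNat = 0 by omega,
      show (-(-((n + 1 : ℕ) : ℤ) + 1)).toNat = n by omega,
      show (-(-((n + 1 : ℕ) : ℤ))).toNat = n + 1 by omega,
      show (-((n + 1 : ℕ) : ℤ)).toNat = 0 by omega, Finset.sum_range_succ']
    push_cast
    ring_nf

lemma offset_add_window {o : ℤ → ℤ} (ho : ∀ i, o (i + 1) = o i + (σ (x i)).length)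
    (s : ℤ) (n : ℕ) : o (s + n) = o s + (substW σ (window x s n)).length := by
  induction n with
  | zero => simp [window, substW]
  | succ n ih =>
    rw [window_add, Nat.cast_succ, ← add_assoc, ho, ih]
    simp [window, substW_append, add_assoc]

end Window

section Chains

variable {L R : ℕ → List A}

lemma exists_getElem_eq_of_prefix (hchain : ∀ n, R n <+: R (n + 1))
    (hR : Tendsto (fun n => (R n).length) atTop atTop) :
    ∃ f : ℕ → A, ∀ n i (hi : i < (R n).length), f i = (R n)[i] := by
  have mono : ∀ m n, m ≤ n → R m <+: R n := fun m n h =>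
    Nat.le_induction (List.prefix_refl _) (fun k _ ih => ih.trans (hchain k)) n h
  choose N hN using fun i => (hR.eventually_gt_atTop i).exists
  refine ⟨fun i => (R (N i))[i]'(hN i), fun n i hi => ?_⟩
  exact ((mono _ _ (le_max_left (N i) n)).getElem _).trans
    ((mono _ _ (le_max_right (N i) n)).getElem hi).symm

variable (hL : Tendsto (fun n => (L n).length) atTop atTop)
  (hR : Tendsto (fun n => (R n).length) atTop atTop)
include hL hR

lemma exists_le_length_left_right (K : ℕ) : ∃ n, K ≤ (L n).length ∧ K ≤ (R n).length :=
  ((hL.eventually_ge_atTop K).and (hR.eventually_ge_atTop K)).exists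

lemma exists_centered (hLc : ∀ n, L n <:+ L (n + 1)) (hRc : ∀ n, R n <+: R (n + 1)) :
    ∃ x : ℤ → A, ∀ n, Centered x (L n) (R n) := by
  obtain ⟨f, hf⟩ := exists_getElem_eq_of_prefix hRc hR
  obtain ⟨g, hg⟩ := exists_getElem_eq_of_prefix (R := fun n => (L n).reverse)
    (fun n => List.reverse_prefix.2 (hLc n)) (by simpa using hL)
  refine ⟨fun j => if 0 ≤ j then f j.toNat else g (-j - 1).toNat, fun n => ⟨?_, ?_⟩⟩
  · refine List.ext_getElem (by simp) fun i hi _ => ?_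
    simp only [length_window] at hi
    rw [getElem_window, if_neg (by omega), hg n _ (by simp; omega), List.getElem_reverse]
    congr 1
    omega
  · refine List.ext_getElem (by simp) fun i hi _ => ?_
    simp only [length_window] at hi
    simp [hf n i hi]

lemma eq_of_centered {x y : ℤ → A} (hx : ∀ n, Centered x (L n) (R n))
    (hy : ∀ n, Centered y (L n) (R n)) : x = y := by
  funext j
  obtain ⟨n, hLn, hRn⟩ := exists_le_length_left_right hL hR (j.natAbs + 1)
  have h := (hx n).window_eq.trans (hy n).window_eq.symm
  have hj : -((L n).length : ℤ) + ((j + (L n).length).toNat : ℕ) = j := by omega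
  have := List.getElem_of_eq h (i := (j + (L n).length).toNat) (by simp; omega)
  rwa [getElem_window, getElem_window, hj] at this

lemma mem_XSub_of_centered {x : ℤ → A} (hx : ∀ n, Centered x (L n) (R n))
    (hlang : ∀ n, L n ++ R n ∈ lang σ) : x ∈ XSub σ := by
  intro s t hst
  obtain ⟨n, hLn, hRn⟩ := exists_le_length_left_right hL hR (s.natAbs + t.natAbs + 1)
  obtain ⟨k, hk⟩ : ∃ k : ℕ, -((L n).length : ℤ) + k = s :=
    ⟨(s + (L n).length).toNat, by omega⟩
  rw [factorOf_eq_window, ← hk, window_eq_take_drop _ (n := (L n).length + (R n).length)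
    (by omega), (hx n).window_eq]
  exact mem_lang_of_infix ((List.take_prefix _ _).isInfix.trans (List.drop_suffix _ _).isInfix)
    (hlang n)

lemma isSubstImage_of_centered {x y : ℤ → A} (hx : ∀ n, Centered x (L n) (R n))
    (hy : ∀ n, Centered y (substW σ (L n)) (substW σ (R n))) : IsSubstImage σ x y := by
  obtain ⟨o, ho0, ho⟩ := exists_offsets fun i => (σ (x i)).length
  refine ⟨o, ho0, ho, fun i => ?_⟩
  obtain ⟨n, hLn, hRn⟩ := exists_le_length_left_right hL hR (i.natAbs + 1)
  have hxn := hx n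
  have hyn := hy n
  generalize L n = u at hLn hxn hyn
  generalize R n = v at hRn hxn hyn
  obtain ⟨k, hk⟩ : ∃ k : ℕ, -(u.length : ℤ) + k = i :=
    ⟨(i + u.length).toNat, by omega⟩
  set r := u.length + v.length - (k + 1)
  have hsplit : u ++ v = window x (-u.length) k ++ ([x i] ++ window x (i + 1) r) := by
    rw [← hxn.window_eq, show u.length + v.length = k + (1 + r) by omega, window_add,
      window_add, hk]
    simp [window]
  -- `x` reads `u` just left of `0`, so `o (-|u|) = -|σ u|`
  have hoi : o i = -((substW σ u).length : ℤ) + (substW σ (window x (-u.length) k)).length := by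
    have h1 := offset_add_window ho (-u.length) u.length
    have h2 := offset_add_window ho (-u.length) k
    rw [hxn.1, neg_add_cancel, ho0] at h1
    rw [hk] at h2
    omega
  have hlen := congrArg (fun w => (substW σ w).length) hsplit
  simp only [substW_append, substW_singleton, List.length_append] at hlen
  rw [factorOf_eq_window, ho, show (o i + (σ (x i)).length - 1 - o i + 1).toNat =
    (σ (x i)).length by omega, hoi,
    window_eq_take_drop _ (n := (substW σ u).length + (substW σ v).length) (by omega),
    hyn.window_eq, ← substW_append, hsplit, substW_append, substW_append, substW_singleton]
  simp

end Chains

namespace PeriodicSeed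

variable (S : PeriodicSeed σ)

def leftChain (m n : ℕ) : List A := substIter σ (m + n * S.period) ([S.left] ++ S.gap)

def rightChain (m n : ℕ) : List A := substIter σ (m + n * S.period) [S.right]

lemma leftChain_suffix (m n : ℕ) : S.leftChain m n <:+ S.leftChain m (n + 1) := by
  rw [leftChain, leftChain, show m + (n + 1) * S.period = m + n * S.period + S.period by ring,
    substIter_add σ (m + n * S.period)]
  refine substIter_suffix _ ?_
  rw [substIter_append, S.gap_fixed]
  exact List.suffix_append_self_iff.2 S.left_suffix

lemma rightChain_prefix (m n : ℕ) : S.rightChain m n <+: S.rightChain m (n + 1) := by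
  rw [rightChain, rightChain, show m + (n + 1) * S.period = m + n * S.period + S.period by ring,
    substIter_add σ (m + n * S.period)]
  exact substIter_prefix _ S.right_prefix

lemma leftChain_succ (m n : ℕ) : S.leftChain (m + 1) n = substW σ (S.leftChain m n) := by
  rw [leftChain, leftChain, add_right_comm, substIter_succ']

lemma rightChain_succ (m n : ℕ) : S.rightChain (m + 1) n = substW σ (S.rightChain m n) := by
  rw [rightChain, rightChain, add_right_comm, substIter_succ']

lemma leftChain_period (n : ℕ) : S.leftChain S.period n = S.leftChain 0 (n + 1) := by
  rw [leftChain, leftChain]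
  ring_nf

lemma rightChain_period (n : ℕ) : S.rightChain S.period n = S.rightChain 0 (n + 1) := by
  rw [rightChain, rightChain]
  ring_nf

lemma leftChain_append_rightChain_mem_lang (n : ℕ) :
    S.leftChain 0 n ++ S.rightChain 0 n ∈ lang σ := by
  rw [leftChain, rightChain, ← substIter_append]
  exact substIter_mem_lang S.mem_lang _

lemma le_add_mul_period (m n : ℕ) : n ≤ m + n * S.period := by
  nlinarith [S.one_le_period]

variable (hne : ∀ a, σ a ≠ [])
include hne

lemma tendsto_length_leftChain (m : ℕ) :
    Tendsto (fun n => (S.leftChain m n).length) atTop atTop := by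
  refine tendsto_atTop_mono (fun n => ?_) S.left_long
  calc (substIter σ n [S.left]).length
      ≤ (substIter σ (m + n * S.period) [S.left]).length :=
        monotone_length_substIter hne _ (S.le_add_mul_period m n)
    _ ≤ (S.leftChain m n).length := by
        rw [leftChain, substIter_append, List.length_append]
        exact Nat.le_add_right _ _

lemma tendsto_length_rightChain (m : ℕ) :
    Tendsto (fun n => (S.rightChain m n).length) atTop atTop :=
  tendsto_atTop_mono
    (fun n => monotone_length_substIter hne _ (S.le_add_mul_period m n)) S.right_long

include S in
/-- `ys m` is the limit of the chains at `m`; the chains at `period` are those at `0`, shifted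
by one. -/
theorem exists_periodic_point :
    ∃ x₀ ∈ XSub σ, ∃ p : ℕ, 1 ≤ p ∧ ∃ ys : ℕ → (ℤ → A),
      ys 0 = x₀ ∧ ys p = x₀ ∧ ∀ k < p, IsSubstImage σ (ys k) (ys (k + 1)) := by
  choose z hz using fun m => exists_centered (S.tendsto_length_leftChain hne m)
    (S.tendsto_length_rightChain hne m) (S.leftChain_suffix m) (S.rightChain_prefix m)
  refine ⟨z 0, mem_XSub_of_centered (S.tendsto_length_leftChain hne 0)
    (S.tendsto_length_rightChain hne 0) (hz 0) S.leftChain_append_rightChain_mem_lang,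
    S.period, S.one_le_period, z, rfl, ?_, fun k _ => ?_⟩
  · exact eq_of_centered ((S.tendsto_length_leftChain hne 0).comp (tendsto_add_atTop_nat 1))
      ((S.tendsto_length_rightChain hne 0).comp (tendsto_add_atTop_nat 1))
      (fun n => by simpa only [leftChain_period, rightChain_period] using hz S.period n)
      (fun n => hz 0 (n + 1))
  · exact isSubstImage_of_centered (S.tendsto_length_leftChain hne k)
      (S.tendsto_length_rightChain hne k) (hz k)
      (fun n => by simpa only [leftChain_succ, rightChain_succ] using hz (k + 1) n)

end PeriodicSeed

end SubstMin

/-- A tame substitution has a periodic point `x₀ ∈ X_σ` for the induced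
action `σ : X_σ → X_σ`: there are `x₀ ∈ X_σ` and `p ≥ 1` with `σᵖ(x₀) = x₀`. -/
theorem statement11 {A : Type*} [Fintype A] (σ : A → List A)
    (hσ : SubstMin.IsSubstitution σ) (htame : SubstMin.Tame σ) :
    ∃ x₀ ∈ SubstMin.XSub σ, ∃ p : ℕ, 1 ≤ p ∧ ∃ ys : ℕ → (ℤ → A),
      ys 0 = x₀ ∧ ys p = x₀ ∧ ∀ k < p, SubstMin.IsSubstImage σ (ys k) (ys (k + 1)) := by
  obtain ⟨hne, hlong⟩ := hσ
  obtain ⟨S⟩ := SubstMin.exists_periodicSeed hne htame hlong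
  exact S.exists_periodic_point hne
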